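/- arXiv:1907.08355 — 2 statements merged into one kernel-verified Lean document; each statement's English description precedes it below -/
import Mathlib

section
/- Let G be a finite abelian group, let Q : G → Finset [S] assign to each element of G a set of at most T probes, and let v ≥ T. Then there exists a subset V ⊆ [S] of size v such that the number of b ∈ G with Q(b) ⊆ V is at least |G| · ((v−T)/(S−T))^T. -/
/-! Average over all `v`-subsets `V` of `[S]`. A set `Q b` with `q ≤ T` elements lies in a
`(S - q).choose (v - q) / S.choose v = ∏_{i < q} (v - i) / (S - i)` fraction of them, and each
factor is at least `(v - T) / (S - T)`. Hence the average number of `b` with `Q b ⊆ V` is at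
least `|G| ((v - T) / (S - T)) ^ T`, and some `V` attains the average. -/

open Finset

theorem sum_card_filter_subset_powersetCard_univ {ι α : Type*} [Fintype ι] [Fintype α]
    [DecidableEq α] (Q : ι → Finset α) {v : ℕ} (hQ : ∀ b, #(Q b) ≤ v) :
    ∑ V ∈ powersetCard v univ, #{b | Q b ⊆ V} =
      ∑ b, (Fintype.card α - #(Q b)).choose (v - #(Q b)) := by
  simp only [card_filter]
  rw [sum_comm]
  refine sum_congr rfl fun b _ => ?_
  rw [← card_filter, ← card_univ]
  exact card_filter_powersetCard_subset _ _ _ (subset_univ _) (hQ b)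

theorem pow_mul_descFactorial_le_descFactorial {r : ℝ} (hr : 0 ≤ r) {S v q : ℕ}
    (h : ∀ i < q, r * ((S - i : ℕ) : ℝ) ≤ ((v - i : ℕ) : ℝ)) :
    r ^ q * S.descFactorial q ≤ v.descFactorial q := by
  induction q with
  | zero => simp
  | succ q ih =>
    have hstep := h q q.lt_succ_self
    have hprev := ih fun i hi => h i (hi.trans q.lt_succ_self)
    calc r ^ (q + 1) * (S.descFactorial (q + 1) : ℝ)
        = (r * ((S - q : ℕ) : ℝ)) * (r ^ q * S.descFactorial q) := by
          rw [Nat.descFactorial_succ]; push_cast; ring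
      _ ≤ ((v - q : ℕ) : ℝ) * v.descFactorial q := by gcongr
      _ = v.descFactorial (q + 1) := by rw [Nat.descFactorial_succ]; push_cast; ring

theorem sub_div_sub_mul_sub_le {S T v i : ℕ} (hi : i < T) (hTv : T ≤ v) (hvS : v ≤ S) :
    ((v : ℝ) - T) / ((S : ℝ) - T) * ((S - i : ℕ) : ℝ) ≤ ((v - i : ℕ) : ℝ) := by
  rw [Nat.cast_sub (by omega), Nat.cast_sub (by omega)]
  have hvi : (i : ℝ) ≤ v := by exact_mod_cast (hi.le.trans hTv)
  rcases (Nat.cast_le.mpr (hTv.trans hvS) : (T : ℝ) ≤ S).eq_or_lt with hST | hST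
  · rw [← hST, sub_self, div_zero, zero_mul]
    linarith
  · rw [div_mul_eq_mul_div, div_le_iff₀ (sub_pos.mpr hST)]
    -- the difference of the two sides is `(T - i) (S - v) ≥ 0`
    have hiT : (i : ℝ) ≤ T := by exact_mod_cast hi.le
    have hvS' : (v : ℝ) ≤ S := by exact_mod_cast hvS
    nlinarith [mul_nonneg (sub_nonneg.mpr hiT) (sub_nonneg.mpr hvS')]

theorem choose_mul_pow_le_choose_sub_sub {S T v q : ℕ} (hqT : q ≤ T) (hTv : T ≤ v)
    (hvS : v ≤ S) :
    (S.choose v : ℝ) * (((v : ℝ) - T) / ((S : ℝ) - T)) ^ T ≤ ((S - q).choose (v - q) : ℝ) := by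
  set r := ((v : ℝ) - T) / ((S : ℝ) - T)
  have hr : 0 ≤ r := div_nonneg (by simp [hTv]) (by simp [hTv.trans hvS])
  have hr1 : r ≤ 1 := div_le_one_of_le₀ (by simp [hvS]) (by simp [hTv.trans hvS])
  -- `S.choose v * v.choose q = S.choose q * (S - q).choose (v - q)`, multiplied by `q!`
  have hchoose : (S.choose v : ℝ) * v.descFactorial q =
      (S - q).choose (v - q) * S.descFactorial q := by
    have := Nat.choose_mul (n := S) (hqT.trans hTv)
    simp only [Nat.descFactorial_eq_factorial_mul_choose]
    calc (S.choose v : ℝ) * ↑(q.factorial * v.choose q)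
        = q.factorial * ↑(S.choose v * v.choose q) := by push_cast; ring
      _ = _ := by rw [this]; push_cast; ring
  have hdesc : r ^ q * S.descFactorial q ≤ v.descFactorial q :=
    pow_mul_descFactorial_le_descFactorial hr fun i hi =>
      sub_div_sub_mul_sub_le (hi.trans_le hqT) hTv hvS
  have hpos : (0 : ℝ) < S.descFactorial q := by
    exact_mod_cast Nat.descFactorial_pos.mpr (hqT.trans (hTv.trans hvS))
  rw [← mul_le_mul_iff_left₀ hpos, ← hchoose]
  calc (S.choose v : ℝ) * r ^ T * S.descFactorial q
      ≤ S.choose v * r ^ q * S.descFactorial q := by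
        gcongr _ * ?_ * _; exact pow_le_pow_of_le_one hr hr1 hqT
    _ = S.choose v * (r ^ q * S.descFactorial q) := mul_assoc _ _ _
    _ ≤ S.choose v * v.descFactorial q := by gcongr

theorem stmt_2_general (G : Type) [Fintype G]
    (S T v : ℕ) (hTv : T ≤ v) (hvS : v ≤ S)
    (Q : G → Finset (Fin S)) (hQ : ∀ b, (Q b).card ≤ T) :
    ∃ V : Finset (Fin S), V.card = v ∧
      (Fintype.card G : ℝ) * (((v : ℝ) - T) / ((S : ℝ) - T)) ^ T ≤
        ((Finset.univ.filter (fun b : G => Q b ⊆ V)).card : ℝ) := by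
  set r := ((v : ℝ) - T) / ((S : ℝ) - T)
  have hcount := sum_card_filter_subset_powersetCard_univ Q fun b => (hQ b).trans hTv
  rw [Fintype.card_fin] at hcount
  have hsum : ∑ _V ∈ powersetCard v (univ : Finset (Fin S)), (Fintype.card G : ℝ) * r ^ T ≤
      ∑ V ∈ powersetCard v univ, (#{b | Q b ⊆ V} : ℝ) :=
    calc ∑ _V ∈ powersetCard v (univ : Finset (Fin S)), (Fintype.card G : ℝ) * r ^ T
        = ∑ _b : G, (S.choose v : ℝ) * r ^ T := by
          simp only [sum_const, card_powersetCard, card_univ, Fintype.card_fin, nsmul_eq_mul]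
          ring
      _ ≤ ∑ b, ((S - #(Q b)).choose (v - #(Q b)) : ℝ) :=
        sum_le_sum fun b _ => choose_mul_pow_le_choose_sub_sub (hQ b) hTv hvS
      _ = ∑ V ∈ powersetCard v univ, (#{b | Q b ⊆ V} : ℝ) := by exact_mod_cast hcount.symm
  have hne : (powersetCard v (univ : Finset (Fin S))).Nonempty :=
    powersetCard_nonempty.mpr (by simpa)
  obtain ⟨V, hV, hle⟩ := exists_le_of_sum_le hne hsum
  exact ⟨V, mem_powersetCard_univ.mp hV, hle⟩

theorem stmt_2 (G : Type) [AddCommGroup G] [Fintype G] [DecidableEq G]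
    (S T v : ℕ) (hT : 0 < T) (hTv : T ≤ v) (hvS : v ≤ S)
    (Q : G → Finset (Fin S)) (hQ : ∀ b, (Q b).card ≤ T) :
    ∃ V : Finset (Fin S), V.card = v ∧
      (Fintype.card G : ℝ) * (((v : ℝ) - T) / ((S : ℝ) - T)) ^ T ≤
        ((Finset.univ.filter (fun b : G => Q b ⊆ V)).card : ℝ) :=
  stmt_2_general G S T v hTv hvS Q hQ
end

section
/- Let N ≥ k−1 and let G be a finite abelian group of size at least N. If a₁,...,a_N are drawn independently and uniformly from G, and Z is the set of all sums Σ_{i∈I} a_i over subsets I ⊆ [N] of size k−1, then C(N, k−1) − E[|Z|] ≤ C(N, k−1)² / |G|. -/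
/-!
A map loses at most as many points as it has ordered collisions, so `C(N, k-1) - |Z|` is at most
the number of ordered pairs `I ≠ J` of `(k-1)`-sets with `∑_{i ∈ I} aᵢ = ∑_{j ∈ J} aⱼ`. For
`I ≠ J` the map `a ↦ ∑_{i ∈ I} aᵢ - ∑_{j ∈ J} aⱼ` is a surjective homomorphism `G^N → G`, so each
such pair collides with probability exactly `1/|G|`.
-/

open Finset

/-- The set of `(k-1)`-wise sums of the coordinates of `a`. -/
def sumsSet (k N : ℕ) {G : Type} [AddCommMonoid G] [DecidableEq G]
    (a : Fin N → G) : Finset G :=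
  (Finset.powersetCard (k - 1) (Finset.univ : Finset (Fin N))).image (fun I => ∑ i ∈ I, a i)

section Collisions

variable {α β : Type*} [DecidableEq β]

theorem card_collisions_eq_sum_card_offDiag_fiber (S : Finset α) (f : α → β) :
    #{p ∈ S.offDiag | f p.1 = f p.2} = ∑ b ∈ S.image f, #{x ∈ S | f x = b}.offDiag := by
  rw [card_eq_sum_card_fiberwise (f := fun p => f p.1) (t := S.image f)
    fun p hp => mem_image_of_mem f (mem_offDiag.1 (mem_filter.1 hp).1).1]
  refine sum_congr rfl fun b _ => congrArg card ?_
  ext ⟨x, y⟩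
  simp only [mem_filter, mem_offDiag]
  grind

theorem card_le_card_image_add_card_collisions (S : Finset α) (f : α → β) :
    #S ≤ #(S.image f) + #{p ∈ S.offDiag | f p.1 = f p.2} := by
  rw [card_collisions_eq_sum_card_offDiag_fiber, card_eq_sum_card_image f S, card_eq_sum_ones,
    ← sum_add_distrib]
  have hm (m : ℕ) : m ≤ 1 + (m * m - m) := by
    rcases m with _ | m
    · simp
    · rw [Nat.add_one_mul, Nat.add_sub_cancel]
      nlinarith
  exact sum_le_sum fun b _ => (offDiag_card _).symm ▸ hm _

end Collisions

theorem AddMonoidHom.card_ker_mul_card_of_surjective {H G : Type*} [AddGroup H] [Fintype H]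
    [AddGroup G] [Fintype G] [DecidableEq G] (φ : H →+ G) (hφ : Function.Surjective φ) :
    #{x | φ x = 0} * Fintype.card G = Fintype.card H := by
  have hfiber (g : G) : #{x | φ x = g} = #{x | φ x = 0} :=
    AddMonoidHom.card_fiber_eq_of_mem_range φ (hφ g) (hφ 0)
  calc #{x | φ x = 0} * Fintype.card G = ∑ g : G, #{x | φ x = g} := by simp [hfiber, mul_comm]
    _ = Fintype.card H := (card_eq_sum_card_fiberwise (by simp)).symm

section SubsetSums

variable {ι G : Type*} [DecidableEq ι] [AddCommGroup G]

def subsetSumDiff (I J : Finset ι) : (ι → G) →+ G where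
  toFun a := ∑ i ∈ I, a i - ∑ j ∈ J, a j
  map_zero' := by simp
  map_add' a b := by simp only [Pi.add_apply, sum_add_distrib]; abel

theorem subsetSumDiff_surjective {I J : Finset ι} (h : ¬I ⊆ J) :
    Function.Surjective (subsetSumDiff I J : (ι → G) →+ G) := by
  obtain ⟨i, hiI, hiJ⟩ := not_subset.1 h
  exact fun g => ⟨Pi.single i g, by simp [subsetSumDiff, hiI, hiJ]⟩

variable [Fintype ι] [Fintype G] [DecidableEq G]

theorem card_sum_eq_sum_mul_card_eq_card_pow {I J : Finset ι} (h : I ≠ J) :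
    #{a : ι → G | ∑ i ∈ I, a i = ∑ j ∈ J, a j} * Fintype.card G =
      Fintype.card G ^ Fintype.card ι := by
  wlog hIJ : ¬I ⊆ J generalizing I J
  · have hJI : ¬J ⊆ I := fun hJI => h (subset_antisymm (not_not.1 hIJ) hJI)
    simpa only [eq_comm] using this h.symm hJI
  rw [← Fintype.card_fun, ← (subsetSumDiff (G := G) I J).card_ker_mul_card_of_surjective
    (subsetSumDiff_surjective hIJ)]
  simp [subsetSumDiff, sub_eq_zero]

theorem sum_card_collisions_mul_card (S : Finset (Finset ι)) :
    (∑ a : ι → G, #{p ∈ S.offDiag | ∑ i ∈ p.1, a i = ∑ j ∈ p.2, a j}) * Fintype.card G =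
      #S.offDiag * Fintype.card G ^ Fintype.card ι := by
  have hswap := sum_card_bipartiteAbove_eq_sum_card_bipartiteBelow (s := univ) (t := S.offDiag)
    (r := fun (a : ι → G) p => ∑ i ∈ p.1, a i = ∑ j ∈ p.2, a j)
  simp only [bipartiteAbove, bipartiteBelow] at hswap
  rw [hswap, sum_mul, sum_const_nat]
  exact fun p hp => card_sum_eq_sum_mul_card_eq_card_pow (mem_offDiag.1 hp).2.2

theorem card_mul_card_pow_le_sum_card_image_add (S : Finset (Finset ι)) :
    #S * Fintype.card G ^ Fintype.card ι * Fintype.card G ≤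
      (∑ a : ι → G, #(S.image fun I => ∑ i ∈ I, a i)) * Fintype.card G +
        #S ^ 2 * Fintype.card G ^ Fintype.card ι := by
  have hpointwise (a : ι → G) := card_le_card_image_add_card_collisions S fun I => ∑ i ∈ I, a i
  have hsum := sum_le_sum fun a (_ : a ∈ univ) => hpointwise a
  rw [sum_const, card_univ, Fintype.card_fun, smul_eq_mul, sum_add_distrib] at hsum
  calc #S * Fintype.card G ^ Fintype.card ι * Fintype.card G
      ≤ (∑ a : ι → G, #(S.image fun I => ∑ i ∈ I, a i)) * Fintype.card G +
        #S.offDiag * Fintype.card G ^ Fintype.card ι := by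
        rw [← sum_card_collisions_mul_card, ← add_mul, mul_comm #S]
        exact Nat.mul_le_mul_right _ hsum
    _ ≤ _ := by
        gcongr
        rw [offDiag_card, sq]
        exact Nat.sub_le _ _

end SubsetSums

theorem stmt_3_general (k N : ℕ)
    (G : Type) [AddCommGroup G] [Fintype G] [DecidableEq G] :
    (N.choose (k - 1) : ℝ) -
        (∑ a : Fin N → G, ((sumsSet k N a).card : ℝ)) / (Fintype.card G : ℝ) ^ N ≤
      (N.choose (k - 1) : ℝ) ^ 2 / (Fintype.card G : ℝ) := by
  have hmain := card_mul_card_pow_le_sum_card_image_add (G := G)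
    (powersetCard (k - 1) (univ : Finset (Fin N)))
  rw [card_powersetCard, card_univ, Fintype.card_fin] at hmain
  have hq : (0 : ℝ) < Fintype.card G := by exact_mod_cast Fintype.card_pos
  have hqN : (0 : ℝ) < (Fintype.card G : ℝ) ^ N := pow_pos hq N
  rw [sub_le_iff_le_add', div_add_div _ _ hqN.ne' hq.ne', le_div_iff₀ (mul_pos hqN hq)]
  have hmainR : ((N.choose (k - 1) * Fintype.card G ^ N * Fintype.card G : ℕ) : ℝ) ≤
      ((∑ a : Fin N → G, #(sumsSet k N a)) * Fintype.card G +
        N.choose (k - 1) ^ 2 * Fintype.card G ^ N : ℕ) := by exact_mod_cast hmain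
  push_cast at hmainR
  linarith

theorem stmt_3 (k N : ℕ) (hk : 3 ≤ k) (hN : k - 1 ≤ N)
    (G : Type) [AddCommGroup G] [Fintype G] [DecidableEq G]
    (hG : N ≤ Fintype.card G) :
    (N.choose (k - 1) : ℝ) -
        (∑ a : Fin N → G, ((sumsSet k N a).card : ℝ)) / (Fintype.card G : ℝ) ^ N ≤
      (N.choose (k - 1) : ℝ) ^ 2 / (Fintype.card G : ℝ) :=
  stmt_3_general k N G
end
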